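/- arXiv:math/0603597 — 4 statements merged into one kernel-verified Lean document; each statement's English description precedes it below -/
import Mathlib

section
/- Let s > 1, K ⊆ ℝ^m compact and M > 0. For each multi-index γ ∈ ℤ₊^m let f_γ : ℝ^m → ℂ be continuous with support contained in K and |f_γ(x)| ≤ M for all γ and all x. Let (a_γ)_{γ∈ℤ₊^m} be complex numbers such that for every h > 0 there exists c > 0 with |a_γ| ≤ c·h^{|γ|}/(γ!)^{3s-1} for all γ. Let φ ∈ S^{(s)}. For ε ∈ (0,1), a multi-index α and x ∈ ℝ^m set u_{α,ε}(x) = Σ_γ a_γ·(−1)^{|γ|}·ε^{−|γ|−|α|}·∫ f_γ(x+εy)·∂^{γ+α}φ(y) dy. Then each such series converges absolutely, and there exist k₁ > 0 and C > 0 such that |u_{α,ε}(x)| ≤ C·(α!)^{3s-1}·exp(k₁·ε^{−1/(2s-1)}) for all multi-indices α, all x ∈ ℝ^m and all ε ∈ (0,1). (This says that the net ((Σ_γ a_γ D^γ f_γ) * φ_ε)_ε, with D^γ = (−i)^{|γ|}∂^γ, satisfies the s-moderate bounds, which is the key estimate in embedding the compactly supported Gevrey ultradistributions of order 3s−1 into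 the algebra of generalized Gevrey ultradistributions of order s.) -/
open MeasureTheory Pointwise

noncomputable def pd (m : ℕ) (j : Fin m) (f : (Fin m → ℝ) → ℂ) : (Fin m → ℝ) → ℂ :=
  fun x => fderiv ℝ f x (Pi.single j 1)

/-- Iterated partial derivative `∂^α` associated with a multi-index `α ∈ ℤ₊^m`. -/
noncomputable def pdm (m : ℕ) (α : Fin m → ℕ) (f : (Fin m → ℝ) → ℂ) : (Fin m → ℝ) → ℂ :=
  (List.finRange m).foldr (fun j g => (pd m j)^[α j] g) f

/-- `|α| = α₁ + ⋯ + α_m` for a multi-index. -/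
def msize {m : ℕ} (α : Fin m → ℕ) : ℕ := ∑ i, α i

/-- `α! = α₁! ⋯ α_m!` for a multi-index. -/
def mfact {m : ℕ} (α : Fin m → ℕ) : ℕ := ∏ i, Nat.factorial (α i)

/-- Euclidean norm on `ℝ^m` realized as `Fin m → ℝ`. -/
noncomputable def eunorm {m : ℕ} (x : Fin m → ℝ) : ℝ := Real.sqrt (∑ i, (x i) ^ 2)

/-- `x^α = x₁^{α₁} ⋯ x_m^{α_m}`. -/
def mpow {m : ℕ} (α : Fin m → ℕ) (x : Fin m → ℝ) : ℝ := ∏ i, x i ^ α i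

/-- Membership in the Gelfand–Shilov space `S^{(s)}`: `φ` is smooth and
`σ_{b,s}(φ) = sup_{α,β} ∫ (|x|^{|β|} / (b^{|α+β|} (α!)^s (β!)^s)) |∂^α φ(x)| dx < ∞`
for every `b > 0`. -/
def InGS (m : ℕ) (s : ℝ) (φ : (Fin m → ℝ) → ℂ) : Prop :=
  ContDiff ℝ (⊤ : ℕ∞) φ ∧ ∀ b > (0:ℝ), ∃ B : ℝ, ∀ α β : Fin m → ℕ,
    (∫⁻ x : Fin m → ℝ, ENNReal.ofReal
      ((eunorm x ^ (msize β) / (b ^ (msize (α + β)) * (mfact α : ℝ) ^ s * (mfact β : ℝ) ^ s)) *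
        Norm.norm (pdm m α φ x))) ≤ ENNReal.ofReal B

/-!
By the Gelfand–Shilov bound with `b = 1`, `β = 0`, the integral in the `γ`-th term is at most
`M B ((γ+α)!)^s`, and `(γ+α)! ≤ 2^{|γ+α|} γ! α!`. With `u = 2^s/ε` and `σ = 2s-1` the term is
therefore at most `c M B (α!)^s u^{|α|} · u^{|γ|} (γ!)^{-σ}`, and the majorant factors into `m`
copies of the series `∑ uⁿ (n!)^{-σ} ≤ 2 exp(σ (2u)^{1/σ})`. Both this and
`u^{|α|} ≤ (α!)^σ exp(σ u^{1/σ})^m` come from `tⁿ ≤ (n!)^σ exp(σ t^{1/σ})`, i.e. `xⁿ/n! ≤ eˣ`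
raised to the power `σ`. Finally `(α!)^{s+σ} = (α!)^{3s-1}` and `(2u)^{1/σ}` is a constant
multiple of `ε^{-1/σ}`.
-/

section Factorial

-- `open scoped Nat` would also turn `φ` into the totient notation, so it stays in this section.
open scoped Nat

lemma pow_le_factorial_rpow_mul_exp {σ t : ℝ} (hσ : 0 < σ) (ht : 0 ≤ t) (n : ℕ) :
    t ^ n ≤ (n ! : ℝ) ^ σ * Real.exp (σ * t ^ σ⁻¹) := by
  have h := Real.pow_div_factorial_le_exp _ (Real.rpow_nonneg ht σ⁻¹) n
  rw [div_le_iff₀ (by positivity)] at h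
  calc t ^ n = ((t ^ σ⁻¹) ^ n) ^ σ := by
        rw [← Real.rpow_natCast (t ^ σ⁻¹), ← Real.rpow_mul ht, ← Real.rpow_mul ht,
          ← Real.rpow_natCast t]
        field_simp
    _ ≤ (Real.exp (t ^ σ⁻¹) * n !) ^ σ := Real.rpow_le_rpow (by positivity) h hσ.le
    _ = (n ! : ℝ) ^ σ * Real.exp (σ * t ^ σ⁻¹) := by
        rw [Real.mul_rpow (Real.exp_nonneg _) (by positivity), ← Real.exp_mul, mul_comm σ,
          mul_comm]

lemma pow_mul_factorial_rpow_neg_le {σ u : ℝ} (hσ : 0 < σ) (hu : 0 ≤ u) (n : ℕ) :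
    u ^ n * (n ! : ℝ) ^ (-σ) ≤ Real.exp (σ * (2 * u) ^ σ⁻¹) * 2⁻¹ ^ n := by
  have h := pow_le_factorial_rpow_mul_exp hσ (by positivity : 0 ≤ 2 * u) n
  have hfac : (0 : ℝ) < (n ! : ℝ) ^ σ := by positivity
  rw [mul_pow, ← le_div_iff₀' (by positivity)] at h
  rw [Real.rpow_neg (by positivity), ← div_eq_mul_inv, div_le_iff₀ hfac]
  calc u ^ n ≤ (n ! : ℝ) ^ σ * Real.exp (σ * (2 * u) ^ σ⁻¹) / 2 ^ n := h
    _ = _ := by rw [inv_pow]; field_simp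

lemma summable_pow_mul_factorial_rpow_neg {σ u : ℝ} (hσ : 0 < σ) (hu : 0 ≤ u) :
    Summable fun n : ℕ => u ^ n * (n ! : ℝ) ^ (-σ) :=
  Summable.of_nonneg_of_le (fun n => by positivity) (pow_mul_factorial_rpow_neg_le hσ hu)
    ((summable_geometric_of_lt_one (by norm_num) (by norm_num)).mul_left _)

lemma tsum_pow_mul_factorial_rpow_neg_le {σ u : ℝ} (hσ : 0 < σ) (hu : 0 ≤ u) :
    ∑' n : ℕ, u ^ n * (n ! : ℝ) ^ (-σ) ≤ 2 * Real.exp (σ * (2 * u) ^ σ⁻¹) := by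
  calc ∑' n : ℕ, u ^ n * (n ! : ℝ) ^ (-σ)
      ≤ ∑' n : ℕ, Real.exp (σ * (2 * u) ^ σ⁻¹) * 2⁻¹ ^ n :=
        Summable.tsum_le_tsum (pow_mul_factorial_rpow_neg_le hσ hu)
          (summable_pow_mul_factorial_rpow_neg hσ hu)
          ((summable_geometric_of_lt_one (by norm_num) (by norm_num)).mul_left _)
    _ = 2 * Real.exp (σ * (2 * u) ^ σ⁻¹) := by rw [tsum_mul_left, tsum_geometric_inv_two, mul_comm]

lemma hasSum_prod_apply_tsum_pow {g : ℕ → ℝ} (hg0 : 0 ≤ g) (hg : Summable g) (m : ℕ) :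
    HasSum (fun γ : Fin m → ℕ => ∏ i, g (γ i)) ((∑' n, g n) ^ m) := by
  induction m with
  | zero => simp
  | succ m ih =>
    have hprod0 : (0 : (Fin m → ℕ) → ℝ) ≤ fun γ => ∏ i, g (γ i) := fun γ =>
      Finset.prod_nonneg fun i _ => hg0 _
    have hsum : HasSum g (∑' n, g n) := hg.hasSum
    have hsummable := hg.mul_of_nonneg ih.summable hg0 hprod0
    have hmul := HasSum.mul hsum ih hsummable
    rw [← (Fin.consEquiv fun _ => ℕ).hasSum_iff, pow_succ']
    have hcons : (fun γ : Fin (m + 1) → ℕ => ∏ i, g (γ i)) ∘ (Fin.consEquiv fun _ => ℕ) =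
        fun p => g p.1 * ∏ i, g (p.2 i) := by
      funext p
      simp [Fin.prod_univ_succ]
    rwa [hcons]

variable {m : ℕ}

lemma msize_add (γ α : Fin m → ℕ) : msize (γ + α) = msize γ + msize α := by
  simp [msize, Finset.sum_add_distrib]

lemma mfact_pos (γ : Fin m → ℕ) : 0 < mfact γ :=
  Finset.prod_pos fun _ _ => Nat.factorial_pos _

lemma pow_msize {R : Type*} [CommMonoid R] (u : R) (γ : Fin m → ℕ) :
    u ^ msize γ = ∏ i, u ^ γ i :=
  (Finset.prod_pow_eq_pow_sum _ _ _).symm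

lemma mfact_rpow (γ : Fin m → ℕ) (r : ℝ) : (mfact γ : ℝ) ^ r = ∏ i, ((γ i)! : ℝ) ^ r := by
  rw [mfact, Nat.cast_prod, Real.finsetProd_rpow _ _ fun i _ => by positivity]

lemma mfact_add_le (γ α : Fin m → ℕ) : mfact (γ + α) ≤ 2 ^ msize (γ + α) * (mfact γ * mfact α) := by
  rw [mfact, mfact, mfact, pow_msize, ← Finset.prod_mul_distrib, ← Finset.prod_mul_distrib]
  refine Finset.prod_le_prod' fun i _ => ?_
  rw [Pi.add_apply, ← Nat.add_choose_mul_factorial_mul_factorial, mul_assoc]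
  exact Nat.mul_le_mul_right _ (Nat.choose_le_two_pow _ _)

lemma mfact_add_rpow_le {s : ℝ} (hs : 0 ≤ s) (γ α : Fin m → ℕ) :
    (mfact (γ + α) : ℝ) ^ s ≤
      (2 ^ s) ^ msize (γ + α) * ((mfact γ : ℝ) ^ s * (mfact α : ℝ) ^ s) := by
  have h : (mfact (γ + α) : ℝ) ≤ 2 ^ msize (γ + α) * ((mfact γ : ℝ) * mfact α) := by
    exact_mod_cast mfact_add_le γ α
  calc (mfact (γ + α) : ℝ) ^ s ≤ (2 ^ msize (γ + α) * ((mfact γ : ℝ) * mfact α)) ^ s :=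
        Real.rpow_le_rpow (Nat.cast_nonneg _) h hs
    _ = _ := by
        rw [Real.mul_rpow (by positivity) (by positivity),
          Real.mul_rpow (by positivity) (by positivity), Real.rpow_pow_comm zero_le_two, mul_comm]

lemma pow_msize_le_mfact_rpow_mul_exp {σ u : ℝ} (hσ : 0 < σ) (hu : 0 ≤ u) (α : Fin m → ℕ) :
    u ^ msize α ≤ (mfact α : ℝ) ^ σ * Real.exp (σ * u ^ σ⁻¹) ^ m := by
  rw [pow_msize, mfact_rpow, ← Fin.prod_const m (Real.exp (σ * u ^ σ⁻¹)),
    ← Finset.prod_mul_distrib]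
  exact Finset.prod_le_prod (fun i _ => by positivity)
    fun i _ => pow_le_factorial_rpow_mul_exp hσ hu (α i)

lemma pow_msize_mul_mfact_rpow (u r : ℝ) (γ : Fin m → ℕ) :
    u ^ msize γ * (mfact γ : ℝ) ^ r = ∏ i, u ^ γ i * ((γ i)! : ℝ) ^ r := by
  rw [pow_msize, mfact_rpow, Finset.prod_mul_distrib]

lemma norm_term_le {s c M B ε : ℝ} (hs : 0 ≤ s) (hc : 0 ≤ c) (hM : 0 ≤ M) (hB : 0 ≤ B)
    (hε : 0 < ε) {γ α : Fin m → ℕ} {a I : ℂ} (n : ℕ)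
    (ha : ‖a‖ ≤ c / (mfact γ : ℝ) ^ (3 * s - 1))
    (hI : ‖I‖ ≤ M * (B * (mfact (γ + α) : ℝ) ^ s)) :
    ‖a * (-1 : ℂ) ^ n * (((ε ^ (msize γ + msize α) : ℝ) : ℂ))⁻¹ * I‖ ≤
      c * M * B * ((mfact α : ℝ) ^ s * (2 ^ s * ε⁻¹) ^ msize α) *
        ∏ i, (2 ^ s * ε⁻¹) ^ γ i * ((γ i)! : ℝ) ^ (-(2 * s - 1)) := by
  have hγ : (0 : ℝ) < mfact γ := by exact_mod_cast mfact_pos γ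
  have hnorm : ‖a * (-1 : ℂ) ^ n * (((ε ^ (msize γ + msize α) : ℝ) : ℂ))⁻¹ * I‖ =
      ‖a‖ * ((ε ^ (msize γ + msize α))⁻¹ * ‖I‖) := by
    rw [norm_mul, norm_mul, norm_mul, norm_pow, norm_neg, norm_one, one_pow, mul_one, norm_inv,
      Complex.norm_real, Real.norm_of_nonneg (by positivity), mul_assoc]
  have hI' : ‖I‖ ≤ M * (B * ((2 ^ s) ^ (msize γ + msize α) *
      ((mfact γ : ℝ) ^ s * (mfact α : ℝ) ^ s))) := by
    refine hI.trans ?_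
    rw [← msize_add]
    gcongr
    exact mfact_add_rpow_le hs γ α
  have hexp : (mfact γ : ℝ) ^ (-(2 * s - 1)) = (mfact γ : ℝ) ^ s / (mfact γ : ℝ) ^ (3 * s - 1) := by
    rw [← Real.rpow_sub hγ]
    ring_nf
  rw [hnorm, ← pow_msize_mul_mfact_rpow, hexp]
  calc ‖a‖ * ((ε ^ (msize γ + msize α))⁻¹ * ‖I‖)
      ≤ c / (mfact γ : ℝ) ^ (3 * s - 1) * ((ε ^ (msize γ + msize α))⁻¹ *
          (M * (B * ((2 ^ s) ^ (msize γ + msize α) *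
            ((mfact γ : ℝ) ^ s * (mfact α : ℝ) ^ s))))) := by
        gcongr
    _ = _ := by
        simp only [mul_pow, inv_pow, pow_add]
        field_simp

lemma mul_pow_msize_mul_tsum_pow_le {s ε D : ℝ} (hs : 1 < s) (hε : 0 < ε) (hD : 0 ≤ D)
    (α : Fin m → ℕ) :
    D * ((mfact α : ℝ) ^ s * (2 ^ s * ε⁻¹) ^ msize α) *
        (∑' n : ℕ, (2 ^ s * ε⁻¹) ^ n * (n ! : ℝ) ^ (-(2 * s - 1))) ^ m ≤
      D * 2 ^ m * (mfact α : ℝ) ^ (3 * s - 1) *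
        Real.exp (2 * m * (2 * s - 1) * (2 ^ (s + 1)) ^ (2 * s - 1)⁻¹ *
          ε ^ (-1 / (2 * s - 1))) := by
  set σ := 2 * s - 1
  set u : ℝ := 2 ^ s * ε⁻¹
  have hσ : 0 < σ := by linarith
  have hu : 0 ≤ u := by positivity
  set X := Real.exp (σ * (2 * u) ^ σ⁻¹)
  have h2u : (2 * u) ^ σ⁻¹ = (2 ^ (s + 1)) ^ σ⁻¹ * ε ^ (-1 / σ) := by
    rw [← mul_assoc, ← Real.rpow_one_add' zero_le_two (by linarith), add_comm,
      Real.mul_rpow (by positivity) (by positivity), Real.inv_rpow hε.le, ← Real.rpow_neg hε.le,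
      neg_div, one_div]
  have hα : u ^ msize α ≤ (mfact α : ℝ) ^ σ * X ^ m := by
    have hX : Real.exp (σ * u ^ σ⁻¹) ≤ X := Real.exp_le_exp.2 (by gcongr; linarith)
    refine (pow_msize_le_mfact_rpow_mul_exp hσ hu α).trans ?_
    gcongr
  have hsum := tsum_pow_mul_factorial_rpow_neg_le hσ hu
  have hsum0 : 0 ≤ ∑' n : ℕ, u ^ n * (n ! : ℝ) ^ (-σ) := tsum_nonneg fun n => by positivity
  have hα0 : (0 : ℝ) < mfact α := by exact_mod_cast mfact_pos α
  calc D * ((mfact α : ℝ) ^ s * u ^ msize α) * (∑' n : ℕ, u ^ n * (n ! : ℝ) ^ (-σ)) ^ m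
      ≤ D * ((mfact α : ℝ) ^ s * ((mfact α : ℝ) ^ σ * X ^ m)) * (2 * X) ^ m := by gcongr
    _ = D * 2 ^ m * (mfact α : ℝ) ^ (s + σ) * X ^ (2 * m) := by
        rw [Real.rpow_add hα0]
        ring
    _ = _ := by
        rw [show s + σ = 3 * s - 1 by ring, ← Real.exp_nat_mul, h2u]
        push_cast
        ring_nf

end Factorial

section Majorant

variable {E : Type*} [SeminormedAddCommGroup E] {m : ℕ} {T : (Fin m → ℕ) → E} {g : ℕ → ℝ}
  {D : ℝ}

lemma summable_norm_of_le_mul_prod (hg0 : 0 ≤ g) (hg : Summable g)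
    (hT : ∀ γ, ‖T γ‖ ≤ D * ∏ i, g (γ i)) : Summable fun γ => ‖T γ‖ :=
  Summable.of_nonneg_of_le (fun _ => norm_nonneg _) hT
    ((hasSum_prod_apply_tsum_pow hg0 hg m).summable.mul_left D)

lemma norm_tsum_le_mul_tsum_pow (hg0 : 0 ≤ g) (hg : Summable g)
    (hT : ∀ γ, ‖T γ‖ ≤ D * ∏ i, g (γ i)) : ‖∑' γ, T γ‖ ≤ D * (∑' n, g n) ^ m := by
  have hprod := hasSum_prod_apply_tsum_pow hg0 hg m
  calc ‖∑' γ, T γ‖ ≤ ∑' γ, ‖T γ‖ := norm_tsum_le_tsum_norm (summable_norm_of_le_mul_prod hg0 hg hT)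
    _ ≤ ∑' γ : Fin m → ℕ, D * ∏ i, g (γ i) :=
        Summable.tsum_le_tsum hT (summable_norm_of_le_mul_prod hg0 hg hT)
          (hprod.summable.mul_left D)
    _ = D * (∑' n, g n) ^ m := by rw [tsum_mul_left, hprod.tsum_eq]

end Majorant

lemma norm_integral_mul_le {X : Type*} [MeasurableSpace X] {μ : Measure X} {g h : X → ℂ}
    {M A : ℝ} (hM : 0 ≤ M) (hA : 0 ≤ A) (hg : ∀ x, ‖g x‖ ≤ M)
    (hh : ∫⁻ x, ‖h x‖ₑ ∂μ ≤ ENNReal.ofReal A) : ‖∫ x, g x * h x ∂μ‖ ≤ M * A := by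
  refine (norm_integral_le_lintegral_norm _).trans
    (ENNReal.toReal_le_of_le_ofReal (by positivity) ?_)
  calc ∫⁻ x, ENNReal.ofReal ‖g x * h x‖ ∂μ ≤ ∫⁻ x, ENNReal.ofReal M * ‖h x‖ₑ ∂μ := by
        refine lintegral_mono fun x => ?_
        rw [← ofReal_norm, ← ENNReal.ofReal_mul hM, norm_mul]
        exact ENNReal.ofReal_le_ofReal (mul_le_mul_of_nonneg_right (hg x) (norm_nonneg _))
    _ ≤ ENNReal.ofReal M * ENNReal.ofReal A := by
        rw [lintegral_const_mul' _ _ ENNReal.ofReal_ne_top]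
        gcongr
    _ = ENNReal.ofReal (M * A) := (ENNReal.ofReal_mul hM).symm

lemma InGS.exists_lintegral_enorm_pdm_le {m : ℕ} {s : ℝ} {φ : (Fin m → ℝ) → ℂ}
    (hφ : InGS m s φ) :
    ∃ B ≥ 0, ∀ δ, ∫⁻ x, ‖pdm m δ φ x‖ₑ ≤ ENNReal.ofReal (B * (mfact δ : ℝ) ^ s) := by
  obtain ⟨B, hB⟩ := hφ.2 1 one_pos
  refine ⟨max B 0, le_max_right _ _, fun δ => ?_⟩
  have hβ0 := hB δ 0
  have hsize : msize (0 : Fin m → ℕ) = 0 := by simp [msize]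
  have hfact : mfact (0 : Fin m → ℕ) = 1 := by simp [mfact]
  simp only [add_zero, hsize, hfact, pow_zero, one_pow, Nat.cast_one, Real.one_rpow, one_mul,
    mul_one, one_div] at hβ0
  set F : ℝ := (mfact δ : ℝ) ^ s
  have hF : 0 < F := Real.rpow_pos_of_pos (by exact_mod_cast mfact_pos δ) s
  calc ∫⁻ x, ‖pdm m δ φ x‖ₑ
      = ∫⁻ x, ENNReal.ofReal F * ENNReal.ofReal (F⁻¹ * ‖pdm m δ φ x‖) :=
        lintegral_congr fun x => by
          rw [← ENNReal.ofReal_mul hF.le, ← mul_assoc, mul_inv_cancel₀ hF.ne', one_mul, ofReal_norm]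
    _ = ENNReal.ofReal F * ∫⁻ x, ENNReal.ofReal (F⁻¹ * ‖pdm m δ φ x‖) :=
        lintegral_const_mul' _ _ ENNReal.ofReal_ne_top
    _ ≤ ENNReal.ofReal F * ENNReal.ofReal (max B 0) := by
        gcongr
        exact hβ0.trans (ENNReal.ofReal_le_ofReal (le_max_left _ _))
    _ = ENNReal.ofReal (max B 0 * F) := by rw [← ENNReal.ofReal_mul hF.le, mul_comm]

theorem embedding_estimate_general (m : ℕ) (s : ℝ) (hs : 1 < s) (M : ℝ)
    (f : (Fin m → ℕ) → (Fin m → ℝ) → ℂ)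
    (hfM : ∀ (γ : Fin m → ℕ) (x : Fin m → ℝ), Norm.norm (f γ x) ≤ M)
    (a : (Fin m → ℕ) → ℂ)
    (ha : ∀ h > (0:ℝ), ∃ c > (0:ℝ), ∀ γ : Fin m → ℕ,
      Norm.norm (a γ) ≤ c * h ^ (msize γ) / (mfact γ : ℝ) ^ (3 * s - 1))
    (φ : (Fin m → ℝ) → ℂ) (hφ : InGS m s φ) :
    (∀ (α : Fin m → ℕ) (x : Fin m → ℝ), ∀ ε ∈ Set.Ioo (0:ℝ) 1,
      Summable fun γ : Fin m → ℕ =>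
        Norm.norm (a γ * (-1 : ℂ) ^ (msize γ) * (((ε ^ (msize γ + msize α) : ℝ) : ℂ))⁻¹ *
          ∫ y : Fin m → ℝ, f γ (x + ε • y) * pdm m (γ + α) φ y)) ∧
    ∃ k₁ > (0:ℝ), ∃ C > (0:ℝ), ∀ (α : Fin m → ℕ) (x : Fin m → ℝ), ∀ ε ∈ Set.Ioo (0:ℝ) 1,
      Norm.norm (∑' γ : Fin m → ℕ,
          a γ * (-1 : ℂ) ^ (msize γ) * (((ε ^ (msize γ + msize α) : ℝ) : ℂ))⁻¹ *
            ∫ y : Fin m → ℝ, f γ (x + ε • y) * pdm m (γ + α) φ y) ≤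
        C * (mfact α : ℝ) ^ (3 * s - 1) * Real.exp (k₁ * ε ^ (-1 / (2 * s - 1))) := by
  obtain ⟨B, hB0, hB⟩ := hφ.exists_lintegral_enorm_pdm_le
  obtain ⟨c, hc, hca⟩ := ha 1 one_pos
  have hM : 0 ≤ M := (norm_nonneg _).trans (hfM 0 0)
  have hσ : 0 < 2 * s - 1 := by linarith
  have hterm (α : Fin m → ℕ) (x : Fin m → ℝ) (ε : ℝ) (hε : 0 < ε) (γ : Fin m → ℕ) :=
    norm_term_le (by linarith) hc.le hM hB0 hε (msize γ) (by simpa using hca γ)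
      (norm_integral_mul_le hM (by positivity) (fun y => hfM γ (x + ε • y)) (hB (γ + α)))
  refine ⟨fun α x ε ⟨hε, _⟩ => summable_norm_of_le_mul_prod (fun n => by positivity)
      (summable_pow_mul_factorial_rpow_neg hσ (by positivity)) (hterm α x ε hε),
    2 * m * (2 * s - 1) * (2 ^ (s + 1)) ^ (2 * s - 1)⁻¹ + 1, by positivity,
    c * M * B * 2 ^ m + 1, by positivity, fun α x ε ⟨hε, _⟩ => ?_⟩
  refine (norm_tsum_le_mul_tsum_pow (fun n => by positivity)
    (summable_pow_mul_factorial_rpow_neg hσ (by positivity)) (hterm α x ε hε)).trans ?_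
  refine (mul_pow_msize_mul_tsum_pow_le hs hε (by positivity) α).trans ?_
  gcongr <;> linarith

/-- moderateness estimate for the regularization
`(Σ_γ a_γ D^γ f_γ) * φ_ε` of a compactly supported Gevrey ultradistribution of
order `3s-1`. -/
theorem embedding_estimate (m : ℕ) (hm : 0 < m) (s : ℝ) (hs : 1 < s)
    (K : Set (Fin m → ℝ)) (hK : IsCompact K) (M : ℝ) (hM : 0 < M)
    (f : (Fin m → ℕ) → (Fin m → ℝ) → ℂ)
    (hfc : ∀ γ : Fin m → ℕ, Continuous (f γ))
    (hfsupp : ∀ γ : Fin m → ℕ, tsupport (f γ) ⊆ K)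
    (hfM : ∀ (γ : Fin m → ℕ) (x : Fin m → ℝ), Norm.norm (f γ x) ≤ M)
    (a : (Fin m → ℕ) → ℂ)
    (ha : ∀ h > (0:ℝ), ∃ c > (0:ℝ), ∀ γ : Fin m → ℕ,
      Norm.norm (a γ) ≤ c * h ^ (msize γ) / (mfact γ : ℝ) ^ (3 * s - 1))
    (φ : (Fin m → ℝ) → ℂ) (hφ : InGS m s φ) :
    (∀ (α : Fin m → ℕ) (x : Fin m → ℝ), ∀ ε ∈ Set.Ioo (0:ℝ) 1,
      Summable fun γ : Fin m → ℕ =>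
        Norm.norm (a γ * (-1 : ℂ) ^ (msize γ) * (((ε ^ (msize γ + msize α) : ℝ) : ℂ))⁻¹ *
          ∫ y : Fin m → ℝ, f γ (x + ε • y) * pdm m (γ + α) φ y)) ∧
    ∃ k₁ > (0:ℝ), ∃ C > (0:ℝ), ∀ (α : Fin m → ℕ) (x : Fin m → ℝ), ∀ ε ∈ Set.Ioo (0:ℝ) 1,
      Norm.norm (∑' γ : Fin m → ℕ,
          a γ * (-1 : ℂ) ^ (msize γ) * (((ε ^ (msize γ + msize α) : ℝ) : ℂ))⁻¹ *
            ∫ y : Fin m → ℝ, f γ (x + ε • y) * pdm m (γ + α) φ y) ≤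
        C * (mfact α : ℝ) ^ (3 * s - 1) * Real.exp (k₁ * ε ^ (-1 / (2 * s - 1))) :=
  embedding_estimate_general m s hs M f hfM a ha φ hφ
end

section
/- Let s > 1 and let (f_ε)_{ε∈(0,1)} be a net of smooth functions on ℝ^m such that for some compact set K ⊆ ℝ^m and ε₁ ∈ (0,1): supp f_ε ⊆ K for all ε ≤ ε₁, and there exist C₁ > 0 and k₁ > 0 with |∂^α f_ε(x)| ≤ C₁^{|α|+1}·(α!)^s·exp(k₁·ε^{−1/(2s-1)}) for all multi-indices α, all x ∈ ℝ^m and all ε ≤ ε₁. Then there exist C > 0 and k₂ > 0 such that |f̂_ε(ξ)| ≤ C·exp(k₁·ε^{−1/(2s-1)} − k₂·|ξ|^{1/s}) for all ξ ∈ ℝ^m and all ε ≤ ε₁. -/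
/-!
Differentiating `n` times in a coordinate direction `j` multiplies `f̂` by `(i ξ_j)^n`, so the
Gevrey bound and the support in `K` give
`|ξ_j|^n |f̂_ε(ξ)| ≤ vol(K) C₁^{n+1} (n!)^s e^{k₁ ε^{-1/(2s-1)}}` for every `n`. As `n! ≤ n^n`,
the choice `n = ⌊(|ξ_j| / (e C₁))^{1/s}⌋` makes the right-hand side `O(e^{-n})`, and taking `j`
with `|ξ_j|` maximal gives `|ξ_j| ≥ |ξ| / √m`.
-/

open MeasureTheory Pointwise

/-- Fourier transform `f̂(ξ) = ∫ e^{-i⟨x,ξ⟩} f(x) dx`. -/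
noncomputable def FT (m : ℕ) (f : (Fin m → ℝ) → ℂ) (ξ : Fin m → ℝ) : ℂ :=
  ∫ x : Fin m → ℝ, Complex.exp (-(Complex.I * ((∑ i, x i * ξ i : ℝ) : ℂ))) * f x

/-- Mathlib's `Real.fourierChar` is `t ↦ e^{2πit}`, hence the factor `(2π)⁻¹`. -/
noncomputable def fourierPairing (m : ℕ) : (Fin m → ℝ) →L[ℝ] (Fin m → ℝ) →L[ℝ] ℝ :=
  (2 * Real.pi)⁻¹ • ∑ i, (ContinuousLinearMap.proj i).smulRight (ContinuousLinearMap.proj i)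

section
variable {m : ℕ}

lemma fourierPairing_apply (v w : Fin m → ℝ) :
    fourierPairing m v w = (2 * Real.pi)⁻¹ * ∑ i, v i * w i := by
  simp [fourierPairing]

lemma FT_eq_fourierIntegral (f : (Fin m → ℝ) → ℂ) (ξ : Fin m → ℝ) :
    FT m f ξ = VectorFourier.fourierIntegral Real.fourierChar volume
      (fourierPairing m).toLinearMap₁₂ f ξ := by
  refine integral_congr_ae (.of_forall fun x => ?_)
  dsimp only
  rw [ContinuousLinearMap.toLinearMap₁₂_apply_apply_apply, Circle.smul_def,
    Real.fourierChar_apply, fourierPairing_apply]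
  have hπ : (Real.pi : ℂ) ≠ 0 := by exact_mod_cast Real.pi_ne_zero
  push_cast
  field_simp
  rfl

lemma FT_pd (j : Fin m) {g : (Fin m → ℝ) → ℂ} (hg : ContDiff ℝ 1 g) (hcs : HasCompactSupport g)
    (ξ : Fin m → ℝ) :
    FT m (pd m j g) ξ = Complex.I * ξ j * FT m g ξ := by
  have hint : Integrable g := hg.continuous.integrable_of_hasCompactSupport hcs
  have hint' : Integrable (fderiv ℝ g) :=
    (hg.continuous_fderiv one_ne_zero).integrable_of_hasCompactSupport (hcs.fderiv ℝ)
  have hpd : FT m (pd m j g) ξ = VectorFourier.fourierIntegral Real.fourierChar volume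
      (fourierPairing m).toLinearMap₁₂ (fderiv ℝ g) ξ (Pi.single j 1) := by
    rw [FT_eq_fourierIntegral, Real.fourierIntegral_continuousLinearMap_apply' hint']
    rfl
  have hpairing : fourierPairing m (Pi.single j 1) ξ = (2 * Real.pi)⁻¹ * ξ j := by
    simp [fourierPairing_apply, Pi.single_apply]
  rw [hpd, VectorFourier.fourierIntegral_fderiv (L := fourierPairing m) hint
      (hg.differentiable one_ne_zero) hint',
    VectorFourier.fourierSMulRight_apply, ← FT_eq_fourierIntegral]
  simp only [neg_apply, ContinuousLinearMap.flip_apply, hpairing]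
  have hπ : (Real.pi : ℂ) ≠ 0 := by exact_mod_cast Real.pi_ne_zero
  rw [Complex.real_smul, smul_eq_mul]
  push_cast
  field_simp

lemma contDiff_pd (j : Fin m) {g : (Fin m → ℝ) → ℂ} {n k : WithTop ℕ∞} (hg : ContDiff ℝ n g)
    (hk : k + 1 ≤ n) : ContDiff ℝ k (pd m j g) :=
  (hg.fderiv_right hk).clm_apply contDiff_const

lemma tsupport_pd_subset (j : Fin m) (g : (Fin m → ℝ) → ℂ) :
    tsupport (pd m j g) ⊆ tsupport g :=
  closure_minimal (fun x hx => support_fderiv_subset ℝ fun h => hx (by simp [pd, h]))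
    (isClosed_tsupport g)

lemma contDiff_iterate_pd (j : Fin m) {g : (Fin m → ℝ) → ℂ} (hg : ContDiff ℝ (⊤ : ℕ∞) g)
    (n : ℕ) : ContDiff ℝ (⊤ : ℕ∞) ((pd m j)^[n] g) := by
  induction n with
  | zero => exact hg
  | succ n ih =>
    rw [Function.iterate_succ_apply']
    exact contDiff_pd j ih (le_of_eq ENat.coe_top_add_one)

lemma tsupport_iterate_pd_subset (j : Fin m) (g : (Fin m → ℝ) → ℂ) (n : ℕ) :
    tsupport ((pd m j)^[n] g) ⊆ tsupport g := by
  induction n with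
  | zero => exact subset_rfl
  | succ n ih =>
    rw [Function.iterate_succ_apply']
    exact (tsupport_pd_subset j _).trans ih

lemma FT_iterate_pd (j : Fin m) {g : (Fin m → ℝ) → ℂ} (hg : ContDiff ℝ (⊤ : ℕ∞) g)
    (hcs : HasCompactSupport g) (n : ℕ) (ξ : Fin m → ℝ) :
    FT m ((pd m j)^[n] g) ξ = (Complex.I * ξ j) ^ n * FT m g ξ := by
  induction n with
  | zero => simp
  | succ n ih =>
    have hcs_n : HasCompactSupport ((pd m j)^[n] g) :=
      hcs.mono' ((subset_tsupport _).trans (tsupport_iterate_pd_subset j g n))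
    rw [Function.iterate_succ_apply',
      FT_pd j ((contDiff_iterate_pd j hg n).of_le (by simp)) hcs_n, ih, pow_succ]
    ring

lemma norm_FT_le {K : Set (Fin m → ℝ)} (hK : volume K < ⊤) {h : (Fin m → ℝ) → ℂ}
    (hsupp : Function.support h ⊆ K) {M : ℝ} (hM : ∀ x ∈ K, ‖h x‖ ≤ M) (ξ : Fin m → ℝ) :
    ‖FT m h ξ‖ ≤ M * volume.real K := by
  rw [FT, ← setIntegral_eq_integral_of_forall_compl_eq_zero fun x hx => by
    simp [Function.notMem_support.1 fun h => hx (hsupp h)]]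
  refine norm_setIntegral_le_of_norm_le_const hK fun x hx => ?_
  rw [norm_mul, mul_comm (Complex.I), ← neg_mul, ← Complex.ofReal_neg,
    Complex.norm_exp_ofReal_mul_I, one_mul]
  exact hM x hx

lemma pow_abs_mul_norm_FT_le (j : Fin m) (n : ℕ) {g : (Fin m → ℝ) → ℂ}
    (hg : ContDiff ℝ (⊤ : ℕ∞) g) {K : Set (Fin m → ℝ)} (hK : IsCompact K)
    (hsupp : tsupport g ⊆ K) {M : ℝ} (hM : ∀ x, ‖(pd m j)^[n] g x‖ ≤ M) (ξ : Fin m → ℝ) :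
    |ξ j| ^ n * ‖FT m g ξ‖ ≤ M * volume.real K := by
  have hbound := norm_FT_le hK.measure_lt_top
    ((subset_tsupport _).trans ((tsupport_iterate_pd_subset j g n).trans hsupp))
    (fun x _ => hM x) ξ
  rwa [FT_iterate_pd j hg (hK.of_isClosed_subset (isClosed_tsupport g) hsupp) n, norm_mul,
    norm_pow, norm_mul, Complex.norm_I, one_mul, Complex.norm_real, Real.norm_eq_abs] at hbound

lemma pdm_single (j : Fin m) (n : ℕ) (f : (Fin m → ℝ) → ℂ) :
    pdm m (Pi.single j n) f = (pd m j)^[n] f := by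
  have key : ∀ l : List (Fin m), l.Nodup →
      l.foldr (fun i g => (pd m i)^[(Pi.single j n : Fin m → ℕ) i] g) f
        = if j ∈ l then (pd m j)^[n] f else f := by
    intro l hl
    induction l with
    | nil => simp
    | cons a t ih =>
      obtain ⟨ha, ht⟩ := List.nodup_cons.1 hl
      rw [List.foldr_cons, ih ht]
      by_cases haj : a = j
      · subst haj
        simp [ha]
      · simp [haj, Ne.symm haj]
  rw [pdm, key _ (List.nodup_finRange m), if_pos (List.mem_finRange j)]

lemma msize_single (j : Fin m) (n : ℕ) : msize (Pi.single j n) = n := by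
  simp [msize]

lemma mfact_single (j : Fin m) (n : ℕ) : mfact (Pi.single j n) = n.factorial := by
  rw [mfact, Finset.prod_eq_single j (fun i _ hi => by simp [hi]) (by simp)]
  simp

lemma exists_eunorm_le_sqrt_mul_abs (hm : 0 < m) (ξ : Fin m → ℝ) :
    ∃ j, eunorm ξ ≤ √m * |ξ j| := by
  have : Nonempty (Fin m) := ⟨⟨0, hm⟩⟩
  obtain ⟨j, -, hj⟩ :=
    Finset.exists_max_image Finset.univ (fun i => |ξ i|) Finset.univ_nonempty
  refine ⟨j, ?_⟩
  have hsum : ∑ i, ξ i ^ 2 ≤ m * ξ j ^ 2 := by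
    calc ∑ i, ξ i ^ 2 ≤ ∑ _i : Fin m, ξ j ^ 2 :=
          Finset.sum_le_sum fun i _ => sq_le_sq.2 (hj i (Finset.mem_univ i))
      _ = m * ξ j ^ 2 := by simp
  calc eunorm ξ ≤ √(m * ξ j ^ 2) := Real.sqrt_le_sqrt hsum
    _ = √m * |ξ j| := by rw [Real.sqrt_mul (Nat.cast_nonneg m), Real.sqrt_sq_eq_abs]

end

lemma pow_mul_factorial_rpow_le_pow {C s a : ℝ} (hC : 0 ≤ C) (hs : 0 ≤ s) {N : ℕ}
    (hN : C * (N : ℝ) ^ s ≤ a) : C ^ N * (N.factorial : ℝ) ^ s ≤ a ^ N := by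
  have hfact : (N.factorial : ℝ) ^ s ≤ ((N : ℝ) ^ s) ^ N := by
    calc (N.factorial : ℝ) ^ s ≤ ((N : ℝ) ^ N) ^ s :=
          Real.rpow_le_rpow (Nat.cast_nonneg _) (by exact_mod_cast N.factorial_le_pow) hs
      _ = ((N : ℝ) ^ s) ^ N := by
          rw [← Real.rpow_natCast, ← Real.rpow_natCast, ← Real.rpow_mul (Nat.cast_nonneg N),
            ← Real.rpow_mul (Nat.cast_nonneg N), mul_comm]
  calc C ^ N * (N.factorial : ℝ) ^ s ≤ C ^ N * ((N : ℝ) ^ s) ^ N := by gcongr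
    _ = (C * (N : ℝ) ^ s) ^ N := (mul_pow _ _ _).symm
    _ ≤ a ^ N := by gcongr

lemma le_mul_exp_neg_rpow_of_forall_pow_mul_le {s C B t y : ℝ} (hs : 0 < s) (hC : 0 < C)
    (hB : 0 ≤ B) (ht : 0 ≤ t) (h : ∀ n : ℕ, t ^ n * y ≤ B * C ^ n * (n.factorial : ℝ) ^ s) :
    y ≤ Real.exp 1 * B * Real.exp (-(t / (Real.exp 1 * C)) ^ (1 / s)) := by
  set x₀ := (t / (Real.exp 1 * C)) ^ (1 / s) with hx₀
  set N := ⌊x₀⌋₊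
  have hN : C * (N : ℝ) ^ s ≤ t / Real.exp 1 := by
    have hbase : 0 ≤ t / (Real.exp 1 * C) := by positivity
    calc C * (N : ℝ) ^ s ≤ C * x₀ ^ s := by
          gcongr; exact Nat.floor_le (by positivity)
      _ = t / Real.exp 1 := by
          rw [hx₀, ← Real.rpow_mul hbase, one_div_mul_cancel hs.ne', Real.rpow_one]
          field_simp
  have hyN : y ≤ B * Real.exp (-N) := by
    rcases Nat.eq_zero_or_pos N with hN0 | hNpos
    · simpa [hN0] using h 0
    have htpos : 0 < t := by
      refine ht.lt_of_ne fun ht0 => hNpos.ne' ?_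
      rw [Nat.floor_eq_zero, hx₀, ← ht0, zero_div, Real.zero_rpow (one_div_ne_zero hs.ne')]
      exact zero_lt_one
    refine le_of_mul_le_mul_left ?_ (pow_pos htpos N)
    calc t ^ N * y ≤ B * (C ^ N * (N.factorial : ℝ) ^ s) := by rw [← mul_assoc]; exact h N
      _ ≤ B * (t / Real.exp 1) ^ N := by
          gcongr; exact pow_mul_factorial_rpow_le_pow hC.le hs.le hN
      _ = t ^ N * (B * Real.exp (-N)) := by
          rw [div_pow, ← Real.exp_nat_mul, mul_one, Real.exp_neg]; ring
  calc y ≤ B * Real.exp (-N) := hyN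
    _ ≤ B * Real.exp (1 + -x₀) := by
        gcongr; linarith [Nat.lt_floor_add_one x₀]
    _ = Real.exp 1 * B * Real.exp (-x₀) := by rw [Real.exp_add]; ring

theorem fourier_decay_of_regular_general (m : ℕ) (hm : 0 < m) (s : ℝ) (hs : 1 < s)
    (f : ℝ → (Fin m → ℝ) → ℂ)
    (hsm : ∀ ε ∈ Set.Ioo (0:ℝ) 1, ContDiff ℝ (⊤ : ℕ∞) (f ε))
    (K : Set (Fin m → ℝ)) (hK : IsCompact K)
    (ε₁ : ℝ)
    (hsupp : ∀ ε ∈ Set.Ioo (0:ℝ) 1, ε ≤ ε₁ → tsupport (f ε) ⊆ K)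
    (C₁ k₁ : ℝ) (hC₁ : 0 < C₁)
    (hbd : ∀ (α : Fin m → ℕ) (x : Fin m → ℝ), ∀ ε ∈ Set.Ioo (0:ℝ) 1, ε ≤ ε₁ →
      ‖pdm m α (f ε) x‖ ≤
        C₁ ^ (msize α + 1) * (mfact α : ℝ) ^ s * Real.exp (k₁ * ε ^ (-1 / (2 * s - 1)))) :
    ∃ C > (0:ℝ), ∃ k₂ > (0:ℝ), ∀ ξ : Fin m → ℝ, ∀ ε ∈ Set.Ioo (0:ℝ) 1, ε ≤ ε₁ →
      ‖FT m (f ε) ξ‖ ≤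
        C * Real.exp (k₁ * ε ^ (-1 / (2 * s - 1)) - k₂ * eunorm ξ ^ (1 / s)) := by
  have hsqrt : 0 < √(m : ℝ) := Real.sqrt_pos.2 (Nat.cast_pos.2 hm)
  set c := (√(m : ℝ) * Real.exp 1 * C₁)⁻¹
  set k₂ := c ^ (1 / s)
  refine ⟨Real.exp 1 * (C₁ * volume.real K + 1), by positivity, k₂, by positivity, ?_⟩
  intro ξ ε hε hεε₁
  set E := Real.exp (k₁ * ε ^ (-1 / (2 * s - 1)))
  obtain ⟨j, hj⟩ := exists_eunorm_le_sqrt_mul_abs hm ξ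
  have hcoord (n : ℕ) : (eunorm ξ / √m) ^ n * ‖FT m (f ε) ξ‖
      ≤ C₁ * E * volume.real K * C₁ ^ n * (n.factorial : ℝ) ^ s := by
    have hderiv (x : Fin m → ℝ) :
        ‖(pd m j)^[n] (f ε) x‖ ≤ C₁ ^ (n + 1) * (n.factorial : ℝ) ^ s * E := by
      simpa only [pdm_single, msize_single, mfact_single] using hbd (Pi.single j n) x ε hε hεε₁
    calc (eunorm ξ / √m) ^ n * ‖FT m (f ε) ξ‖ ≤ |ξ j| ^ n * ‖FT m (f ε) ξ‖ := by
          gcongr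
          · exact div_nonneg (Real.sqrt_nonneg _) hsqrt.le
          · rwa [div_le_iff₀' hsqrt]
      _ ≤ C₁ ^ (n + 1) * (n.factorial : ℝ) ^ s * E * volume.real K :=
          pow_abs_mul_norm_FT_le j n (hsm ε hε) hK (hsupp ε hε hεε₁) hderiv ξ
      _ = C₁ * E * volume.real K * C₁ ^ n * (n.factorial : ℝ) ^ s := by ring
  have hdecay := le_mul_exp_neg_rpow_of_forall_pow_mul_le (t := eunorm ξ / √m) (by linarith) hC₁
    (by positivity) (div_nonneg (Real.sqrt_nonneg _) hsqrt.le) hcoord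
  have hrate : eunorm ξ / √m / (Real.exp 1 * C₁) = c * eunorm ξ := by
    simp only [c]
    field_simp
  rw [hrate, Real.mul_rpow (x := c) (y := eunorm ξ) (by positivity) (Real.sqrt_nonneg _)] at hdecay
  calc ‖FT m (f ε) ξ‖
      ≤ Real.exp 1 * (C₁ * volume.real K) * (E * Real.exp (-(k₂ * eunorm ξ ^ (1 / s)))) := by
        linarith
    _ ≤ Real.exp 1 * (C₁ * volume.real K + 1) * (E * Real.exp (-(k₂ * eunorm ξ ^ (1 / s)))) := by
        gcongr; linarith
    _ = _ := by rw [sub_eq_add_neg, Real.exp_add]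

/-- Paley–Wiener-type estimate: a compactly supported net with uniform
Gevrey-`s` bounds has Fourier transform decaying like `exp(-k₂ |ξ|^{1/s})`. -/
theorem fourier_decay_of_regular (m : ℕ) (hm : 0 < m) (s : ℝ) (hs : 1 < s)
    (f : ℝ → (Fin m → ℝ) → ℂ)
    (hsm : ∀ ε ∈ Set.Ioo (0:ℝ) 1, ContDiff ℝ (⊤ : ℕ∞) (f ε))
    (K : Set (Fin m → ℝ)) (hK : IsCompact K)
    (ε₁ : ℝ) (hε₁ : ε₁ ∈ Set.Ioo (0:ℝ) 1)
    (hsupp : ∀ ε ∈ Set.Ioo (0:ℝ) 1, ε ≤ ε₁ → tsupport (f ε) ⊆ K)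
    (C₁ k₁ : ℝ) (hC₁ : 0 < C₁) (hk₁ : 0 < k₁)
    (hbd : ∀ (α : Fin m → ℕ) (x : Fin m → ℝ), ∀ ε ∈ Set.Ioo (0:ℝ) 1, ε ≤ ε₁ →
      ‖pdm m α (f ε) x‖ ≤
        C₁ ^ (msize α + 1) * (mfact α : ℝ) ^ s * Real.exp (k₁ * ε ^ (-1 / (2 * s - 1)))) :
    ∃ C > (0:ℝ), ∃ k₂ > (0:ℝ), ∀ ξ : Fin m → ℝ, ∀ ε ∈ Set.Ioo (0:ℝ) 1, ε ≤ ε₁ →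
      ‖FT m (f ε) ξ‖ ≤
        C * Real.exp (k₁ * ε ^ (-1 / (2 * s - 1)) - k₂ * eunorm ξ ^ (1 / s)) :=
  fourier_decay_of_regular_general m hm s hs f hsm K hK ε₁ hsupp C₁ k₁ hC₁ hbd
end

section
/- Let s > 1 and let (f_ε)_{ε∈(0,1)} be a net of smooth functions on ℝ^m such that for some compact set K ⊆ ℝ^m, ε₁ ∈ (0,1), C₀ > 0 and k₀ > 0: supp f_ε ⊆ K and sup_{x} |f_ε(x)| ≤ C₀·exp(k₀·ε^{−1/(2s-1)}) for all ε ≤ ε₁. Assume that every ξ₀ ∈ ℝ^m \ {0} has an open cone Γ containing ξ₀ and constants C, k₁, k₂ > 0, ε₀ ∈ (0,1) with |f̂_ε(ξ)| ≤ C·exp(k₁·ε^{−1/(2s-1)} − k₂·|ξ|^{1/s}) for all ξ ∈ Γ and ε ≤ ε₀. Then there exist C' > 0, k₁' > 0, k₂' > 0 and ε₀' ∈ (0,1) such that |f̂_ε(ξ)| ≤ C'·exp(k₁'·ε^{−1/(2s-1)} − k₂'·|ξ|^{1/s}) for all ξ ∈ ℝ^m and all ε ≤ ε₀'. (This is the content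 of: the set of s-singular directions of f is empty if and only if f is a regular generalized Gevrey ultradistribution.) -/
open MeasureTheory Pointwise

/-!
A conic estimate `C exp(k₁ a(ε) - k₂ w(ξ))` survives finite unions of cones (take the largest
`C`, `k₁` and the smallest `k₂`, `ε₀`), and by compactness of the unit sphere finitely many of the
given open cones cover every nonzero direction. The remaining frequency `ξ = 0` is handled by the
trivial bound `|f̂_ε(0)| ≤ sup |f_ε| · vol K`.
-/

open Set

def DecayEstimateOn {E : Type*} (F : ℝ → E → ℝ) (a : ℝ → ℝ) (w : E → ℝ) (S : Set E) : Prop :=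
  ∃ C > (0:ℝ), ∃ k₁ > (0:ℝ), ∃ k₂ > (0:ℝ), ∃ ε₀ ∈ Ioo (0:ℝ) 1,
    ∀ ξ ∈ S, ∀ ε ∈ Ioo (0:ℝ) 1, ε ≤ ε₀ → F ε ξ ≤ C * Real.exp (k₁ * a ε - k₂ * w ξ)

theorem mul_exp_le_mul_exp {C C' k₁ k₁' k₂ k₂' a w : ℝ} (hC : 0 ≤ C) (hCC' : C ≤ C')
    (hk₁ : k₁ ≤ k₁') (hk₂ : k₂' ≤ k₂) (ha : 0 ≤ a) (hw : 0 ≤ w) :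
    C * Real.exp (k₁ * a - k₂ * w) ≤ C' * Real.exp (k₁' * a - k₂' * w) := by
  gcongr
  exact hC.trans hCC'

namespace DecayEstimateOn

variable {E : Type*} {F : ℝ → E → ℝ} {a : ℝ → ℝ} {w : E → ℝ} {S T : Set E}

theorem mono (h : DecayEstimateOn F a w T) (hST : S ⊆ T) : DecayEstimateOn F a w S := by
  obtain ⟨C, hC, k₁, hk₁, k₂, hk₂, ε₀, hε₀, hest⟩ := h
  exact ⟨C, hC, k₁, hk₁, k₂, hk₂, ε₀, hε₀, fun ξ hξ => hest ξ (hST hξ)⟩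

theorem empty : DecayEstimateOn F a w ∅ :=
  ⟨1, one_pos, 1, one_pos, 1, one_pos, 1 / 2, ⟨by norm_num, by norm_num⟩, by simp⟩

theorem union (ha : ∀ ε ∈ Ioo (0:ℝ) 1, 0 ≤ a ε) (hw : ∀ ξ, 0 ≤ w ξ)
    (hS : DecayEstimateOn F a w S) (hT : DecayEstimateOn F a w T) :
    DecayEstimateOn F a w (S ∪ T) := by
  obtain ⟨C, hC, k₁, hk₁, k₂, hk₂, ε₀, hε₀, hestS⟩ := hS
  obtain ⟨C', hC', k₁', hk₁', k₂', hk₂', ε₀', hε₀', hestT⟩ := hT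
  refine ⟨max C C', lt_max_of_lt_left hC, max k₁ k₁', lt_max_of_lt_left hk₁, min k₂ k₂',
    lt_min hk₂ hk₂', min ε₀ ε₀', ⟨lt_min hε₀.1 hε₀'.1, min_lt_of_left_lt hε₀.2⟩, ?_⟩
  rintro ξ (hξ | hξ) ε hε hεle
  · exact (hestS ξ hξ ε hε (hεle.trans (min_le_left _ _))).trans
      (mul_exp_le_mul_exp hC.le (le_max_left _ _) (le_max_left _ _) (min_le_left _ _)
        (ha ε hε) (hw ξ))
  · exact (hestT ξ hξ ε hε (hεle.trans (min_le_right _ _))).trans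
      (mul_exp_le_mul_exp hC'.le (le_max_right _ _) (le_max_right _ _) (min_le_right _ _)
        (ha ε hε) (hw ξ))

theorem biUnion {ι : Type*} (ha : ∀ ε ∈ Ioo (0:ℝ) 1, 0 ≤ a ε) (hw : ∀ ξ, 0 ≤ w ξ)
    {t : Finset ι} {Γ : ι → Set E} (h : ∀ i ∈ t, DecayEstimateOn F a w (Γ i)) :
    DecayEstimateOn F a w (⋃ i ∈ t, Γ i) := by
  classical
  induction t using Finset.induction_on with
  | empty => simpa using empty
  | insert i t _ ih =>
    rw [Finset.set_biUnion_insert]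
    exact union ha hw (h i (Finset.mem_insert_self i t))
      (ih fun j hj => h j (Finset.mem_insert_of_mem hj))

theorem singleton {ξ : E} {C₀ k₀ ε₁ : ℝ} (hk₀ : 0 < k₀) (hε₁ : ε₁ ∈ Ioo (0:ℝ) 1)
    (hbd : ∀ ε ∈ Ioo (0:ℝ) 1, ε ≤ ε₁ → F ε ξ ≤ C₀ * Real.exp (k₀ * a ε)) :
    DecayEstimateOn F a w {ξ} := by
  refine ⟨max C₀ 1 * Real.exp (w ξ), by positivity, k₀, hk₀, 1, one_pos, ε₁, hε₁, ?_⟩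
  rintro _ rfl ε hε hεle
  calc F ε _ ≤ C₀ * Real.exp (k₀ * a ε) := hbd ε hε hεle
    _ ≤ max C₀ 1 * Real.exp (k₀ * a ε) := by gcongr; exact le_max_left _ _
    _ = max C₀ 1 * Real.exp (w _) * Real.exp (k₀ * a ε - 1 * w _) := by
      rw [mul_assoc, ← Real.exp_add]; ring_nf

theorem compl_zero [NormedAddCommGroup E] [NormedSpace ℝ E] [ProperSpace E]
    (ha : ∀ ε ∈ Ioo (0:ℝ) 1, 0 ≤ a ε) (hw : ∀ ξ, 0 ≤ w ξ)
    (h : ∀ ξ₀ : E, ξ₀ ≠ 0 → ∃ Γ : Set E, IsOpen Γ ∧ (∀ ξ ∈ Γ, ∀ l : ℝ, 0 < l → l • ξ ∈ Γ) ∧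
      ξ₀ ∈ Γ ∧ DecayEstimateOn F a w Γ) :
    DecayEstimateOn F a w {0}ᶜ := by
  choose! Γ hopen hcone hmem hdecay using h
  have sphere_ne_zero : ∀ u ∈ Metric.sphere (0 : E) 1, u ≠ 0 := fun u hu =>
    ne_zero_of_mem_unit_sphere (⟨u, hu⟩ : Metric.sphere (0 : E) 1)
  obtain ⟨t, ht, hcover⟩ := (isCompact_sphere (0 : E) 1).elim_nhds_subcover Γ
    fun u hu => (hopen u (sphere_ne_zero u hu)).mem_nhds (hmem u (sphere_ne_zero u hu))
  refine (biUnion ha hw fun u hu => hdecay u (sphere_ne_zero u (ht u hu))).mono ?_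
  intro ξ (hξ : ξ ≠ 0)
  have hξn : 0 < ‖ξ‖ := norm_pos_iff.mpr hξ
  obtain ⟨u, hu, hξu⟩ := mem_iUnion₂.mp
    (hcover (mem_sphere_zero_iff_norm.mpr (norm_smul_inv_norm (𝕜 := ℝ) hξ)))
  have := hcone u (sphere_ne_zero u (ht u hu)) _ hξu ‖ξ‖ hξn
  rw [RCLike.ofReal_real_eq_id, id, smul_smul, mul_inv_cancel₀ hξn.ne', one_smul] at this
  exact mem_iUnion₂.mpr ⟨u, hu, this⟩

end DecayEstimateOn

theorem norm_FT_le_mul_measureReal {m : ℕ} {g : (Fin m → ℝ) → ℂ} {K : Set (Fin m → ℝ)}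
    (hKm : MeasurableSet K) (hKfin : volume K ≠ ⊤) (hsupp : Function.support g ⊆ K) {M : ℝ}
    (hbd : ∀ x, ‖g x‖ ≤ M) (ξ : Fin m → ℝ) :
    ‖FT m g ξ‖ ≤ M * volume.real K := by
  have hM_int : Integrable (K.indicator fun _ => M) :=
    (integrable_indicator_iff hKm).mpr (integrableOn_const hKfin)
  calc ‖FT m g ξ‖ ≤ ∫ x, K.indicator (fun _ => M) x := by
        refine norm_integral_le_of_norm_le hM_int (Filter.Eventually.of_forall fun x => ?_)
        rw [norm_mul, Complex.norm_exp, Complex.neg_re, Complex.mul_re, Complex.I_re,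
          Complex.I_im, Complex.ofReal_re, Complex.ofReal_im]
        by_cases hx : x ∈ K
        · simpa [indicator_of_mem hx] using hbd x
        · simp [indicator_of_notMem hx, Function.notMem_support.mp (mt (@hsupp x) hx)]
    _ = M * volume.real K := by rw [integral_indicator_const _ hKm, smul_eq_mul, mul_comm]

theorem global_decay_of_empty_singular_directions_general
    (m : ℕ) (s : ℝ)
    (f : ℝ → (Fin m → ℝ) → ℂ)
    (K : Set (Fin m → ℝ)) (hK : IsCompact K)
    (ε₁ : ℝ) (hε₁ : ε₁ ∈ Set.Ioo (0:ℝ) 1)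
    (hsupp : ∀ ε ∈ Set.Ioo (0:ℝ) 1, ε ≤ ε₁ → tsupport (f ε) ⊆ K)
    (C₀ k₀ : ℝ) (hk₀ : 0 < k₀)
    (hbd : ∀ ε ∈ Set.Ioo (0:ℝ) 1, ε ≤ ε₁ → ∀ x : Fin m → ℝ,
      ‖f ε x‖ ≤ C₀ * Real.exp (k₀ * ε ^ (-1 / (2 * s - 1))))
    (hdir : ∀ ξ₀ : Fin m → ℝ, ξ₀ ≠ 0 → ∃ Γ : Set (Fin m → ℝ), IsOpen Γ ∧
      (0 : Fin m → ℝ) ∉ Γ ∧ (∀ ξ ∈ Γ, ∀ l : ℝ, 0 < l → l • ξ ∈ Γ) ∧ ξ₀ ∈ Γ ∧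
      ∃ C > (0:ℝ), ∃ k₁ > (0:ℝ), ∃ k₂ > (0:ℝ), ∃ ε₀ ∈ Set.Ioo (0:ℝ) 1,
        ∀ ξ ∈ Γ, ∀ ε ∈ Set.Ioo (0:ℝ) 1, ε ≤ ε₀ →
          ‖FT m (f ε) ξ‖ ≤
            C * Real.exp (k₁ * ε ^ (-1 / (2 * s - 1)) - k₂ * eunorm ξ ^ (1 / s))) :
    ∃ C' > (0:ℝ), ∃ k₁' > (0:ℝ), ∃ k₂' > (0:ℝ), ∃ ε₀' ∈ Set.Ioo (0:ℝ) 1,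
      ∀ ξ : Fin m → ℝ, ∀ ε ∈ Set.Ioo (0:ℝ) 1, ε ≤ ε₀' →
        ‖FT m (f ε) ξ‖ ≤
          C' * Real.exp (k₁' * ε ^ (-1 / (2 * s - 1)) - k₂' * eunorm ξ ^ (1 / s)) := by
  have ha : ∀ ε ∈ Ioo (0:ℝ) 1, 0 ≤ ε ^ (-1 / (2 * s - 1)) := fun ε hε =>
    Real.rpow_nonneg hε.1.le _
  have hw : ∀ ξ : Fin m → ℝ, 0 ≤ eunorm ξ ^ (1 / s) := fun ξ =>
    Real.rpow_nonneg (Real.sqrt_nonneg _) _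
  have at_zero : DecayEstimateOn (fun ε ξ => ‖FT m (f ε) ξ‖) (fun ε => ε ^ (-1 / (2 * s - 1)))
      (fun ξ => eunorm ξ ^ (1 / s)) {0} := by
    refine DecayEstimateOn.singleton (C₀ := C₀ * volume.real K) hk₀ hε₁ fun ε hε hεle => ?_
    rw [mul_right_comm]
    exact norm_FT_le_mul_measureReal hK.isClosed.measurableSet hK.measure_lt_top.ne
      (subset_tsupport _ |>.trans (hsupp ε hε hεle)) (hbd ε hε hεle) 0
  have off_zero := DecayEstimateOn.compl_zero ha hw fun ξ₀ hξ₀ => by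
    obtain ⟨Γ, hopen, -, hcone, hmem, hest⟩ := hdir ξ₀ hξ₀
    exact ⟨Γ, hopen, hcone, hmem, hest⟩
  obtain ⟨C, hC, k₁, hk₁, k₂, hk₂, ε₀, hε₀, hest⟩ := at_zero.union ha hw off_zero
  exact ⟨C, hC, k₁, hk₁, k₂, hk₂, ε₀, hε₀, fun ξ => hest ξ (union_compl_self _ ▸ mem_univ ξ)⟩

/-- if every nonzero direction admits a conic Fourier-decay estimate,
then a single global estimate holds on all of `ℝ^m`. -/
theorem global_decay_of_empty_singular_directions
    (m : ℕ) (hm : 0 < m) (s : ℝ) (hs : 1 < s)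
    (f : ℝ → (Fin m → ℝ) → ℂ)
    (hsm : ∀ ε ∈ Set.Ioo (0:ℝ) 1, ContDiff ℝ (⊤ : ℕ∞) (f ε))
    (K : Set (Fin m → ℝ)) (hK : IsCompact K)
    (ε₁ : ℝ) (hε₁ : ε₁ ∈ Set.Ioo (0:ℝ) 1)
    (hsupp : ∀ ε ∈ Set.Ioo (0:ℝ) 1, ε ≤ ε₁ → tsupport (f ε) ⊆ K)
    (C₀ k₀ : ℝ) (hC₀ : 0 < C₀) (hk₀ : 0 < k₀)
    (hbd : ∀ ε ∈ Set.Ioo (0:ℝ) 1, ε ≤ ε₁ → ∀ x : Fin m → ℝ,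
      ‖f ε x‖ ≤ C₀ * Real.exp (k₀ * ε ^ (-1 / (2 * s - 1))))
    (hdir : ∀ ξ₀ : Fin m → ℝ, ξ₀ ≠ 0 → ∃ Γ : Set (Fin m → ℝ), IsOpen Γ ∧
      (0 : Fin m → ℝ) ∉ Γ ∧ (∀ ξ ∈ Γ, ∀ l : ℝ, 0 < l → l • ξ ∈ Γ) ∧ ξ₀ ∈ Γ ∧
      ∃ C > (0:ℝ), ∃ k₁ > (0:ℝ), ∃ k₂ > (0:ℝ), ∃ ε₀ ∈ Set.Ioo (0:ℝ) 1,
        ∀ ξ ∈ Γ, ∀ ε ∈ Set.Ioo (0:ℝ) 1, ε ≤ ε₀ →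
          ‖FT m (f ε) ξ‖ ≤
            C * Real.exp (k₁ * ε ^ (-1 / (2 * s - 1)) - k₂ * eunorm ξ ^ (1 / s))) :
    ∃ C' > (0:ℝ), ∃ k₁' > (0:ℝ), ∃ k₂' > (0:ℝ), ∃ ε₀' ∈ Set.Ioo (0:ℝ) 1,
      ∀ ξ : Fin m → ℝ, ∀ ε ∈ Set.Ioo (0:ℝ) 1, ε ≤ ε₀' →
        ‖FT m (f ε) ξ‖ ≤
          C' * Real.exp (k₁' * ε ^ (-1 / (2 * s - 1)) - k₂' * eunorm ξ ^ (1 / s)) :=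
  global_decay_of_empty_singular_directions_general m s f K hK ε₁ hε₁ hsupp C₀ k₀ hk₀ hbd hdir
end

section
/- Let s > 1 and let F : ℝ^m → ℂ. Suppose there exist c₁, k₁, k₂ > 0 such that for every k₃ > 0 there exist c' > 0 and η ∈ (0,1) with |F(ξ)| ≤ c'·exp(−k₃·ε^{−1/(2s-1)}) + c₁·exp(k₁·ε^{−1/(2s-1)} − k₂·|ξ|^{1/s}) for all ξ ∈ ℝ^m and all ε ∈ (0, η]. Then there exist c > 0 and δ > 0 such that |F(ξ)| ≤ c·exp(−δ·|ξ|^{1/s}) for all ξ ∈ ℝ^m. (This trading of ε-decay for ξ-decay, obtained by choosing ε = (k₁/((k₂−r)|ξ|^{1/s}))^{2s-1} for r ∈ (0,k₂), is the key step in proving that a compactly supported Gevrey ultradistribution of order 3s−1 which is a regular generalized Gevrey ultradistribution is a compactly supported Gevrey function of order s, i.e. G^{s,∞}(Ω) ∩ E'_{3s-1}(Ω) = D^s(Ω).) -/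
open MeasureTheory Pointwise

/-!
Taking `k₃ = 1` and substituting `t = ε ^ (-1 / (2s - 1))`, the hypothesis says that for all
large `t`, `|F ξ| ≤ c' e^{-t} + c₁ e^{k₁ t - k₂ |ξ|^{1/s}}`. Taking `t` proportional to
`|ξ|^{1/s}`, namely `t = k₂ |ξ|^{1/s} / (2 k₁)` (or the threshold, whichever is larger), makes
both exponents at most a negative multiple of `|ξ|^{1/s}`.
-/

open Real

lemma exists_rpow_eq_of_rpow_le {q η t : ℝ} (hq : q < 0) (hη : 0 < η) (ht : η ^ q ≤ t) :
    ∃ ε, 0 < ε ∧ ε ≤ η ∧ ε ^ q = t := by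
  have ht₀ : 0 < t := (rpow_pos_of_pos hη q).trans_le ht
  refine ⟨t ^ q⁻¹, rpow_pos_of_pos ht₀ _, ?_, rpow_inv_rpow ht₀.le hq.ne⟩
  calc t ^ q⁻¹ ≤ (η ^ q) ^ q⁻¹ :=
        rpow_le_rpow_of_nonpos (rpow_pos_of_pos hη q) ht (inv_nonpos.mpr hq.le)
    _ = η := rpow_rpow_inv hη.le hq.ne

lemma mul_max_sub_le {k₁ k₂ T₀ u δ : ℝ} (hk₁ : 0 < k₁) (hk₂ : 0 ≤ k₂) (hT₀ : 0 ≤ T₀)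
    (hu : 0 ≤ u) (hδ : δ ≤ k₂ / 2) :
    k₁ * max T₀ (k₂ / (2 * k₁) * u) - k₂ * u ≤ k₁ * T₀ - δ * u := by
  have hbalance : k₁ * (k₂ / (2 * k₁) * u) = k₂ / 2 * u := by field_simp
  have hδu : δ * u ≤ k₂ / 2 * u := mul_le_mul_of_nonneg_right hδ hu
  rcases max_cases T₀ (k₂ / (2 * k₁) * u) with ⟨h, -⟩ | ⟨h, -⟩ <;> rw [h]
  · nlinarith [mul_nonneg hk₂ hu]
  · nlinarith [mul_nonneg hk₁.le hT₀]

lemma le_mul_exp_neg_of_forall_ge {y c' c₁ k₁ k₂ T₀ u δ : ℝ} (hc' : 0 ≤ c') (hc₁ : 0 ≤ c₁)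
    (hk₁ : 0 < k₁) (hk₂ : 0 ≤ k₂) (hT₀ : 0 ≤ T₀) (hu : 0 ≤ u)
    (hδ₁ : δ ≤ k₂ / (2 * k₁)) (hδ₂ : δ ≤ k₂ / 2)
    (h : ∀ t ≥ T₀, y ≤ c' * exp (-t) + c₁ * exp (k₁ * t - k₂ * u)) :
    y ≤ (c' + c₁ * exp (k₁ * T₀)) * exp (-δ * u) := by
  set t := max T₀ (k₂ / (2 * k₁) * u)
  have hfirst : -t ≤ -δ * u := by
    have : δ * u ≤ t := (mul_le_mul_of_nonneg_right hδ₁ hu).trans (le_max_right _ _)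
    linarith
  have hsecond : k₁ * t - k₂ * u ≤ k₁ * T₀ + -δ * u := by
    linarith [mul_max_sub_le hk₁ hk₂ hT₀ hu hδ₂]
  calc y ≤ c' * exp (-t) + c₁ * exp (k₁ * t - k₂ * u) := h t (le_max_left _ _)
    _ ≤ c' * exp (-δ * u) + c₁ * exp (k₁ * T₀ + -δ * u) := by gcongr
    _ = (c' + c₁ * exp (k₁ * T₀)) * exp (-δ * u) := by rw [exp_add]; ring

theorem trade_epsilon_decay_for_xi_decay_general (m : ℕ) (s : ℝ) (hs : 1 < s)
    (F : (Fin m → ℝ) → ℂ)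
    (hyp : ∃ c₁ > (0:ℝ), ∃ k₁ > (0:ℝ), ∃ k₂ > (0:ℝ), ∀ k₃ > (0:ℝ),
      ∃ c' > (0:ℝ), ∃ η ∈ Set.Ioo (0:ℝ) 1, ∀ ξ : Fin m → ℝ, ∀ ε : ℝ, 0 < ε → ε ≤ η →
        ‖F ξ‖ ≤ c' * Real.exp (-k₃ * ε ^ (-1 / (2 * s - 1))) +
          c₁ * Real.exp (k₁ * ε ^ (-1 / (2 * s - 1)) - k₂ * eunorm ξ ^ (1 / s))) :
    ∃ c > (0:ℝ), ∃ δ > (0:ℝ), ∀ ξ : Fin m → ℝ,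
      ‖F ξ‖ ≤ c * Real.exp (-δ * eunorm ξ ^ (1 / s)) := by
  obtain ⟨c₁, hc₁, k₁, hk₁, k₂, hk₂, hyp⟩ := hyp
  obtain ⟨c', hc', η, ⟨hη, -⟩, H⟩ := hyp 1 one_pos
  have hq : -1 / (2 * s - 1) < 0 := div_neg_of_neg_of_pos (by norm_num) (by linarith)
  set T₀ := η ^ (-1 / (2 * s - 1))
  have hT₀ : 0 ≤ T₀ := (rpow_pos_of_pos hη _).le
  refine ⟨c' + c₁ * exp (k₁ * T₀), by positivity, min (k₂ / (2 * k₁)) (k₂ / 2),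
    lt_min (by positivity) (by positivity), fun ξ => ?_⟩
  refine le_mul_exp_neg_of_forall_ge hc'.le hc₁.le hk₁ hk₂.le hT₀
    (rpow_nonneg (sqrt_nonneg _) _) (min_le_left _ _) (min_le_right _ _) fun t ht => ?_
  obtain ⟨ε, hε, hεη, rfl⟩ := exists_rpow_eq_of_rpow_le hq hη ht
  simpa only [neg_one_mul] using H ξ ε hε hεη

/-- trading `ε`-decay for `ξ`-decay: the key step in the proof of
`G^{s,∞}(Ω) ∩ E'_{3s-1}(Ω) = D^s(Ω)`. -/
theorem trade_epsilon_decay_for_xi_decay (m : ℕ) (hm : 0 < m) (s : ℝ) (hs : 1 < s)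
    (F : (Fin m → ℝ) → ℂ)
    (hyp : ∃ c₁ > (0:ℝ), ∃ k₁ > (0:ℝ), ∃ k₂ > (0:ℝ), ∀ k₃ > (0:ℝ),
      ∃ c' > (0:ℝ), ∃ η ∈ Set.Ioo (0:ℝ) 1, ∀ ξ : Fin m → ℝ, ∀ ε : ℝ, 0 < ε → ε ≤ η →
        ‖F ξ‖ ≤ c' * Real.exp (-k₃ * ε ^ (-1 / (2 * s - 1))) +
          c₁ * Real.exp (k₁ * ε ^ (-1 / (2 * s - 1)) - k₂ * eunorm ξ ^ (1 / s))) :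
    ∃ c > (0:ℝ), ∃ δ > (0:ℝ), ∀ ξ : Fin m → ℝ,
      ‖F ξ‖ ≤ c * Real.exp (-δ * eunorm ξ ^ (1 / s)) :=
  trade_epsilon_decay_for_xi_decay_general m s hs F hyp
end
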